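/- For any inner function u, D_u D_u^* = I − (1 − |u(0)|^2)·(u ⊗ u), where u ⊗ u is the rank-one operator f ↦ ⟨f, u⟩u on K_u^⊥. -/

import Mathlib

open MeasureTheory Complex AddCircle

noncomputable section

namespace Paper

/-- The period `2π`. -/
abbrev T : ℝ := 2 * Real.pi

instance : Fact (0 < T) := ⟨by positivity⟩

/-- Normalized Lebesgue (Haar) measure on the circle. -/
abbrev μ : Measure (AddCircle T) := haarAddCircle

/-- The space `L²(𝕋, dm)`. -/
abbrev L2 : Type := Lp ℂ 2 μ

lemma memLp_mul {u : AddCircle T → ℂ} (hm : AEStronglyMeasurable u μ)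
    (hb : ∀ᵐ x ∂μ, ‖u x‖ ≤ 1) (f : L2) :
    MemLp (fun x => u x * (f : AddCircle T → ℂ) x) 2 μ := by
  refine (Lp.memLp f).of_le (hm.mul (Lp.aestronglyMeasurable f)) ?_
  filter_upwards [hb] with x hx
  calc ‖u x * (f : AddCircle T → ℂ) x‖ = ‖u x‖ * ‖(f : AddCircle T → ℂ) x‖ := norm_mul _ _
    _ ≤ 1 * ‖(f : AddCircle T → ℂ) x‖ := by gcongr
    _ = ‖(f : AddCircle T → ℂ) x‖ := one_mul _

/-- Multiplication by a measurable function bounded by `1`, as a bounded operator on `L²`. -/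
def mulCLM (u : AddCircle T → ℂ) (hm : AEStronglyMeasurable u μ)
    (hb : ∀ᵐ x ∂μ, ‖u x‖ ≤ 1) : L2 →L[ℂ] L2 :=
  LinearMap.mkContinuous
    { toFun := fun f => (memLp_mul hm hb f).toLp _
      map_add' := fun f g => by
        show MemLp.toLp _ (memLp_mul hm hb (f + g)) = _
        have h : (fun x => u x * ((f + g : L2) : AddCircle T → ℂ) x)
            =ᵐ[μ] (fun x => u x * (f : AddCircle T → ℂ) x)
              + (fun x => u x * (g : AddCircle T → ℂ) x) := by
          filter_upwards [Lp.coeFn_add f g] with x hx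
          simp only [Pi.add_apply, hx, mul_add]
        rw [MemLp.toLp_congr (memLp_mul hm hb (f + g))
          ((memLp_mul hm hb f).add (memLp_mul hm hb g)) h, MemLp.toLp_add]
      map_smul' := fun c f => by
        have h : (fun x => u x * ((c • f : L2) : AddCircle T → ℂ) x)
            =ᵐ[μ] c • (fun x => u x * (f : AddCircle T → ℂ) x) := by
          filter_upwards [Lp.coeFn_smul c f] with x hx
          simp only [Pi.smul_apply, hx, smul_eq_mul]
          ring
        simp only [RingHom.id_apply]
        rw [MemLp.toLp_congr (memLp_mul hm hb (c • f))
          ((memLp_mul hm hb f).const_smul c) h, MemLp.toLp_const_smul] }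
    1
    (fun f => by
      simp only [LinearMap.coe_mk, AddHom.coe_mk, one_mul]
      rw [Lp.norm_toLp]
      have h1 : eLpNorm (fun x => u x * (f : AddCircle T → ℂ) x) 2 μ
          ≤ eLpNorm (f : AddCircle T → ℂ) 2 μ := by
        refine eLpNorm_mono_ae ?_
        filter_upwards [hb] with x hx
        calc ‖u x * (f : AddCircle T → ℂ) x‖
            = ‖u x‖ * ‖(f : AddCircle T → ℂ) x‖ := norm_mul _ _
          _ ≤ 1 * ‖(f : AddCircle T → ℂ) x‖ := by gcongr
          _ = ‖(f : AddCircle T → ℂ) x‖ := one_mul _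
      calc (eLpNorm (fun x => u x * (f : AddCircle T → ℂ) x) 2 μ).toReal
          ≤ (eLpNorm (f : AddCircle T → ℂ) 2 μ).toReal :=
            ENNReal.toReal_mono (Lp.eLpNorm_ne_top f) h1
        _ = ‖f‖ := (Lp.norm_def f).symm)

lemma memLp_conj (f : L2) :
    MemLp (fun x => (starRingEnd ℂ) ((f : AddCircle T → ℂ) x)) 2 μ := by
  refine (Lp.memLp f).of_le ?_ ?_
  · exact Complex.continuous_conj.comp_aestronglyMeasurable (Lp.aestronglyMeasurable f)
  · filter_upwards with x
    simp

/-- Complex conjugation on `L²`. -/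
def conjL2 (f : L2) : L2 := (memLp_conj f).toLp _

/-- The independent variable `z = e^{iθ}` as a function on the circle. -/
def zfun : AddCircle T → ℂ := fun x => fourier 1 x

lemma zfun_meas : AEStronglyMeasurable zfun μ :=
  ((map_continuous (fourier (T := T) 1)).aestronglyMeasurable)

lemma zfun_norm : ∀ᵐ x ∂μ, ‖zfun x‖ ≤ 1 := by
  filter_upwards with x
  simp [zfun, Circle.norm_coe]

/-- Multiplication by `z` (the bilateral shift `M` on `L²`). -/
def Mz : L2 →L[ℂ] L2 := mulCLM zfun zfun_meas zfun_norm

/-- Multiplication by `conj z`. -/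
def Mzbar : L2 →L[ℂ] L2 :=
  mulCLM (fun x => (starRingEnd ℂ) (zfun x))
    (Complex.continuous_conj.comp_aestronglyMeasurable zfun_meas)
    (by filter_upwards with x; simp [zfun, Circle.norm_coe])

/-- The Hardy space `H² = {f ∈ L² : f̂(n) = 0 for all n < 0}`. -/
def H2 : Submodule ℂ L2 where
  carrier := {f | ∀ n : ℤ, n < 0 → fourierBasis.repr f n = 0}
  add_mem' := by
    intro f g hf hg n hn
    simp [map_add, hf n hn, hg n hn]
  zero_mem' := by intro n hn; simp
  smul_mem' := by
    intro c f hf n hn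
    simp [_root_.map_smul, hf n hn]

lemma continuous_coeff (n : ℤ) :
    Continuous fun f : L2 => fourierBasis.repr f n := by
  rw [Metric.continuous_iff]
  intro f ε hε
  refine ⟨ε, hε, fun g hg => ?_⟩
  have h1 : fourierBasis.repr g n - fourierBasis.repr f n = fourierBasis.repr (g - f) n := by
    simp [map_sub]
  have h2 : ‖fourierBasis.repr (g - f) n‖ ≤ ‖fourierBasis.repr (g - f)‖ :=
    lp.norm_apply_le_norm (by norm_num) _ n
  have h3 : ‖fourierBasis.repr (g - f)‖ = ‖g - f‖ :=
    fourierBasis.repr.norm_map _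
  calc dist (fourierBasis.repr g n) (fourierBasis.repr f n)
      = ‖fourierBasis.repr (g - f) n‖ := by rw [dist_eq_norm, h1]
    _ ≤ ‖g - f‖ := by rw [← h3]; exact h2
    _ = dist g f := (dist_eq_norm g f).symm
    _ < ε := hg

lemma H2_isClosed : IsClosed (H2 : Set L2) := by
  have : (H2 : Set L2) =
      ⋂ n ∈ {m : ℤ | m < 0}, {f : L2 | fourierBasis.repr f n = 0} := by
    ext f
    simp only [Set.mem_iInter, Set.mem_setOf_eq]
    rfl
  rw [this]
  exact isClosed_biInter fun n _ => isClosed_eq (continuous_coeff n) continuous_const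

instance : CompleteSpace H2 := H2_isClosed.completeSpace_coe

/-- The Riesz projection `P⁺` of `L²` onto `H²`. -/
def Pp : L2 →L[ℂ] L2 := H2.subtypeL ∘L H2.orthogonalProjectionOnto

/-- The projection `P⁻ = I − P⁺` of `L²` onto `conj(H²₀)`. -/
def Pm : L2 →L[ℂ] L2 := ContinuousLinearMap.id ℂ L2 - Pp

/-- `conj(H²₀) = {f ∈ L² : f̂(n) = 0 for all n ≥ 0}`, the orthogonal complement of `H²`. -/
def Hm : Submodule ℂ L2 where
  carrier := {f | ∀ n : ℤ, 0 ≤ n → fourierBasis.repr f n = 0}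
  add_mem' := by
    intro f g hf hg n hn
    simp [map_add, hf n hn, hg n hn]
  zero_mem' := by intro n hn; simp
  smul_mem' := by
    intro c f hf n hn
    simp [_root_.map_smul, hf n hn]

/-- The constant function `1` as an element of `L²`. -/
def oneL2 : L2 := (memLp_const (1 : ℂ)).toLp _

/-- An inner function: a bounded measurable unimodular function on the circle whose
negative Fourier coefficients vanish. -/
structure InnerData where
  u : AddCircle T → ℂ
  meas : AEStronglyMeasurable u μ
  unim : ∀ᵐ x ∂μ, ‖u x‖ = 1
  anal : ∀ n : ℤ, n < 0 → fourierCoeff u n = 0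

namespace InnerData

variable (U : InnerData)

lemma bd : ∀ᵐ x ∂μ, ‖U.u x‖ ≤ 1 := by
  filter_upwards [U.unim] with x hx
  rw [hx]

/-- Multiplication by `u`: the operator `M_u` on `L²`. -/
def M : L2 →L[ℂ] L2 := mulCLM U.u U.meas U.bd

/-- Multiplication by `conj u`: the operator `M_{conj u}` on `L²`. -/
def Mc : L2 →L[ℂ] L2 :=
  mulCLM (fun x => (starRingEnd ℂ) (U.u x))
    (Complex.continuous_conj.comp_aestronglyMeasurable U.meas)
    (by filter_upwards [U.bd] with x hx; simpa using hx)

/-- `u` as an element of `L²`. -/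
def toL2 : L2 :=
  (memLp_top_of_bound U.meas 1 U.bd |>.mono_exponent le_top).toLp _

/-- The value `u(0)` of (the analytic extension of) `u` at the origin, i.e. the mean of `u`. -/
def a0 : ℂ := fourierCoeff U.u 0

/-- The subspace `uH²`. -/
def uH2 : Submodule ℂ L2 := Submodule.map (U.M : L2 →ₗ[ℂ] L2) H2

/-- The model space `K_u = H² ∩ (uH²)ᗮ`. -/
def Ku : Submodule ℂ L2 := H2 ⊓ (U.uH2)ᗮ

lemma Ku_isClosed : IsClosed (U.Ku : Set L2) := by
  have : (U.Ku : Set L2) = (H2 : Set L2) ∩ ((U.uH2)ᗮ : Set L2) := rfl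
  rw [this]
  exact H2_isClosed.inter (U.uH2).isClosed_orthogonal

instance : CompleteSpace U.Ku := U.Ku_isClosed.completeSpace_coe

/-- `K_u^⊥`, the orthogonal complement of the model space in `L²`. -/
def KP : Submodule ℂ L2 := (U.Ku)ᗮ

instance : CompleteSpace U.KP := (U.Ku).isClosed_orthogonal.completeSpace_coe

/-- The orthogonal projection `P_u : L² → K_u` (viewed as an operator on `L²`). -/
def Pu : L2 →L[ℂ] L2 := (U.Ku).subtypeL ∘L (U.Ku).orthogonalProjectionOnto

/-- The dual of the compressed shift: `D_u = (I − P_u) M_z |_{K_u^⊥}`. -/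
def Du : U.KP →L[ℂ] U.KP :=
  (U.KP).orthogonalProjectionOnto ∘L Mz ∘L (U.KP).subtypeL

/-- The conjugation `C_u f = u · conj(z f)` on `L²`. -/
def C (f : L2) : L2 := U.M (conjL2 (Mz f))

/-- The reproducing kernel of `K_u` at `0`: `k₀ᵘ = 1 − conj(u(0))·u`. -/
def k0 : L2 := oneL2 - (starRingEnd ℂ) U.a0 • U.toL2

/-- The similarity `V_u = P⁻ + (conj u/conj u(0)) P⁺` of the paper. -/
def V : L2 →L[ℂ] L2 := Pm + ((starRingEnd ℂ) U.a0)⁻¹ • (U.Mc ∘L Pp)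

/-- The inverse similarity `V_u⁻¹ = P⁻ + conj(u(0)) u P⁺`. -/
def Vinv : L2 →L[ℂ] L2 := Pm + (starRingEnd ℂ) U.a0 • (U.M ∘L Pp)

end InnerData

lemma Mz_mem_H2 {f : L2} (hf : f ∈ H2) : Mz f ∈ H2 := by
  intro n hn
  rw [fourierBasis_repr]
  have hcoe : (Mz f : AddCircle T → ℂ) =ᵐ[μ] fun x => zfun x * (f : AddCircle T → ℂ) x :=
    MemLp.coeFn_toLp (memLp_mul zfun_meas zfun_norm f)
  have h1 : fourierCoeff (Mz f : AddCircle T → ℂ) n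
      = fourierCoeff (f : AddCircle T → ℂ) (n - 1) := by
    unfold fourierCoeff
    rw [integral_congr_ae (by filter_upwards [hcoe] with x hx; rw [hx])]
    refine integral_congr_ae ?_
    filter_upwards with x
    have : fourier (-n) x * zfun x = fourier (-(n - 1)) x := by
      unfold zfun
      rw [show (-(n - 1) : ℤ) = -n + 1 by ring, fourier_add]
    simp only [smul_eq_mul]
    calc fourier (-n) x * (zfun x * (f : AddCircle T → ℂ) x)
        = (fourier (-n) x * zfun x) * (f : AddCircle T → ℂ) x := by ring
      _ = fourier (-(n - 1)) x * (f : AddCircle T → ℂ) x := by rw [this]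
  rw [h1]
  have := hf (n - 1) (by omega)
  rwa [fourierBasis_repr] at this

/-- The unilateral shift `S` on `H²`. -/
def Shift : H2 →L[ℂ] H2 :=
  (Mz ∘L H2.subtypeL).codRestrict H2 (fun x => Mz_mem_H2 x.2)

end Paper

/-!
`D_u` is the compression of the unitary `M_z` to `K_u^⊥`, so for `f ⊥ K_u` one gets
`D_u D_u^* f = f - P_{K_u^⊥} M_z P_{K_u} (z̄ f)`. Since `z K_u ⊆ K_u ⊕ ℂ u`, the component of
`z̄ f` in `K_u` is `⟨f, u⟩ z̄ (u - u(0))`, whence `D_u D_u^* f = f - ⟨f, u⟩ P_{K_u^⊥} (u - u(0))`.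
Finally `P_{K_u^⊥} 1 = conj (u(0)) u`, because `1 - conj (u(0)) u` is the reproducing kernel of
`K_u` at `0`, so `P_{K_u^⊥} (u - u(0)) = (1 - |u(0)|²) u`.
-/

open scoped InnerProductSpace ComplexConjugate

namespace Submodule

variable {𝕜 E : Type*} [RCLike 𝕜] [NormedAddCommGroup E] [InnerProductSpace 𝕜 E]

def compression (W : Submodule 𝕜 E) [W.HasOrthogonalProjection] (T : E →L[𝕜] E) :
    W →L[𝕜] W :=
  W.orthogonalProjectionOnto ∘L T ∘L W.subtypeL

variable [CompleteSpace E] (W : Submodule 𝕜 E) [CompleteSpace W]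

lemma adjoint_compression (T : E →L[𝕜] E) :
    ContinuousLinearMap.adjoint (W.compression T)
      = W.compression (ContinuousLinearMap.adjoint T) := by
  simp only [compression, ContinuousLinearMap.adjoint_comp, Submodule.adjoint_subtypeL,
    Submodule.adjoint_orthogonalProjectionOnto, ContinuousLinearMap.comp_assoc]

lemma coe_compression_adjoint_compression_apply {T : E →L[𝕜] E}
    (hT : ∀ x, T (ContinuousLinearMap.adjoint T x) = x) (f : W) :
    (W.compression T (ContinuousLinearMap.adjoint (W.compression T) f) : E)
      = f - W.starProjection (T (Wᗮ.starProjection (ContinuousLinearMap.adjoint T f))) := by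
  set g := ContinuousLinearMap.adjoint T f
  have hsplit : W.starProjection g = g - Wᗮ.starProjection g :=
    eq_sub_of_add_eq (W.starProjection_add_starProjection_orthogonal g)
  calc (W.compression T (ContinuousLinearMap.adjoint (W.compression T) f) : E)
      = W.starProjection (T (W.starProjection g)) := by
        rw [adjoint_compression]; rfl
    _ = _ := by
        rw [hsplit, map_sub, hT, map_sub, W.starProjection_eq_self_iff.mpr f.2]

end Submodule

lemma HilbertBasis.inner_eq_zero_of_repr_eq_zero_or {ι 𝕜 E : Type*} [RCLike 𝕜]
    [NormedAddCommGroup E] [InnerProductSpace 𝕜 E] (b : HilbertBasis ι 𝕜 E) {x y : E}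
    (h : ∀ i, b.repr x i = 0 ∨ b.repr y i = 0) : ⟪x, y⟫_𝕜 = 0 := by
  rw [← b.tsum_inner_mul_inner x y]
  refine (tsum_congr fun i => ?_).trans tsum_zero
  rcases h i with hx | hy
  · rw [← inner_conj_symm, ← b.repr_apply_apply, hx, map_zero, zero_mul]
  · rw [← b.repr_apply_apply, hy, mul_zero]

lemma fourierCoeff_fourier_mul {P : ℝ} [Fact (0 < P)] (k : ℤ) (g : AddCircle P → ℂ) (n : ℤ) :
    fourierCoeff (fun x => fourier k x * g x) n = fourierCoeff g (n - k) := by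
  refine integral_congr_ae (Filter.Eventually.of_forall fun x => ?_)
  simp only [smul_eq_mul, ← mul_assoc, ← fourier_add, show -n + k = -(n - k) by ring]

lemma fourierCoeff_conj {P : ℝ} [Fact (0 < P)] (g : AddCircle P → ℂ) (n : ℤ) :
    fourierCoeff (fun x => conj (g x)) n = conj (fourierCoeff g (-n)) := by
  rw [fourierCoeff, fourierCoeff, ← integral_conj]
  refine integral_congr_ae (Filter.Eventually.of_forall fun x => ?_)
  simp only [smul_eq_mul, map_mul, neg_neg, ← fourier_neg]

namespace Paper

lemma coeFn_mulCLM (u : AddCircle T → ℂ) (hu : AEStronglyMeasurable u μ)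
    (hu₁ : ∀ᵐ x ∂μ, ‖u x‖ ≤ 1) (f : L2) : mulCLM u hu hu₁ f =ᵐ[μ] fun x => u x * f x :=
  MemLp.coeFn_toLp (memLp_mul hu hu₁ f)

section MulCLM

variable {u v : AddCircle T → ℂ} {hu : AEStronglyMeasurable u μ} {hu₁ : ∀ᵐ x ∂μ, ‖u x‖ ≤ 1}
  {hv : AEStronglyMeasurable v μ} {hv₁ : ∀ᵐ x ∂μ, ‖v x‖ ≤ 1}

lemma mulCLM_mulCLM_comm (f : L2) :
    mulCLM u hu hu₁ (mulCLM v hv hv₁ f) = mulCLM v hv hv₁ (mulCLM u hu hu₁ f) := by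
  apply Lp.ext
  filter_upwards [coeFn_mulCLM u hu hu₁ (mulCLM v hv hv₁ f), coeFn_mulCLM v hv hv₁ f,
    coeFn_mulCLM v hv hv₁ (mulCLM u hu hu₁ f), coeFn_mulCLM u hu hu₁ f] with x h1 h2 h3 h4
  rw [h1, h2, h3, h4, mul_left_comm]

lemma mulCLM_mulCLM_of_mul_eq_one (h : ∀ᵐ x ∂μ, u x * v x = 1) (f : L2) :
    mulCLM u hu hu₁ (mulCLM v hv hv₁ f) = f := by
  apply Lp.ext
  filter_upwards [coeFn_mulCLM u hu hu₁ (mulCLM v hv hv₁ f), coeFn_mulCLM v hv hv₁ f, h]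
    with x h1 h2 h3
  rw [h1, h2, ← mul_assoc, h3, one_mul]

lemma inner_mulCLM_left {hū : AEStronglyMeasurable (fun x => conj (u x)) μ}
    {hū₁ : ∀ᵐ x ∂μ, ‖conj (u x)‖ ≤ 1} (f g : L2) :
    ⟪mulCLM u hu hu₁ f, g⟫_ℂ = ⟪f, mulCLM (fun x => conj (u x)) hū hū₁ g⟫_ℂ := by
  rw [L2.inner_def, L2.inner_def]
  refine integral_congr_ae ?_
  filter_upwards [coeFn_mulCLM u hu hu₁ f, coeFn_mulCLM _ hū hū₁ g] with x h1 h2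
  simp only [RCLike.inner_apply, h1, h2, map_mul]
  ring

lemma repr_mulCLM_of_eq_fourier {k : ℤ} (hk : ∀ x, u x = fourier k x) (f : L2) (n : ℤ) :
    fourierBasis.repr (mulCLM u hu hu₁ f) n = fourierBasis.repr f (n - k) := by
  rw [fourierBasis_repr, fourierBasis_repr, fourierCoeff_congr_ae (coeFn_mulCLM u hu hu₁ f)]
  simp only [hk, fourierCoeff_fourier_mul]

end MulCLM

lemma oneL2_eq_fourierBasis_zero : oneL2 = fourierBasis (T := T) 0 := by
  rw [oneL2, coe_fourierBasis]
  apply Lp.ext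
  filter_upwards [MemLp.coeFn_toLp (memLp_const (1 : ℂ)), coeFn_fourierLp (T := T) 2 0]
    with x h1 h2
  rw [h1, h2, fourier_zero]

lemma coeFn_oneL2 : oneL2 =ᵐ[μ] fun _ => (1 : ℂ) := MemLp.coeFn_toLp _

lemma inner_oneL2_left (f : L2) : ⟪oneL2, f⟫_ℂ = fourierBasis.repr f 0 := by
  rw [oneL2_eq_fourierBasis_zero, HilbertBasis.repr_apply_apply]

lemma inner_oneL2_right (f : L2) : ⟪f, oneL2⟫_ℂ = conj (fourierBasis.repr f 0) := by
  rw [← inner_oneL2_left, inner_conj_symm]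

lemma repr_oneL2 (n : ℤ) : fourierBasis.repr oneL2 n = if n = 0 then 1 else 0 := by
  rw [oneL2_eq_fourierBasis_zero, HilbertBasis.repr_self, lp.single_apply, Pi.single_apply]

lemma one_mem_H2 : oneL2 ∈ H2 := fun n hn => by rw [repr_oneL2, if_neg hn.ne]

lemma inner_eq_zero_of_mem_H2_of_mem_Hm {f g : L2} (hf : f ∈ H2) (hg : g ∈ Hm) :
    ⟪f, g⟫_ℂ = 0 :=
  fourierBasis.inner_eq_zero_of_repr_eq_zero_or fun n => (lt_or_ge n 0).imp (hf n) (hg n)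

lemma Mz_Mzbar (f : L2) : Mz (Mzbar f) = f :=
  mulCLM_mulCLM_of_mul_eq_one (.of_forall fun x => by
    simp [zfun, Complex.mul_conj, Complex.normSq_eq_norm_sq, Circle.norm_coe]) f

lemma inner_Mz_left (f g : L2) : ⟪Mz f, g⟫_ℂ = ⟪f, Mzbar g⟫_ℂ :=
  inner_mulCLM_left f g

lemma inner_Mzbar_left (f g : L2) : ⟪Mzbar f, g⟫_ℂ = ⟪f, Mz g⟫_ℂ := by
  rw [← inner_conj_symm, ← inner_Mz_left, inner_conj_symm]

lemma Mz_adjoint : ContinuousLinearMap.adjoint Mz = Mzbar :=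
  ((ContinuousLinearMap.eq_adjoint_iff _ _).mpr inner_Mzbar_left).symm

lemma repr_Mz (f : L2) (n : ℤ) : fourierBasis.repr (Mz f) n = fourierBasis.repr f (n - 1) :=
  repr_mulCLM_of_eq_fourier (fun _ => rfl) f n

lemma repr_Mzbar (f : L2) (n : ℤ) :
    fourierBasis.repr (Mzbar f) n = fourierBasis.repr f (n + 1) :=
  (repr_mulCLM_of_eq_fourier (k := -1) (fun x => by rw [fourier_neg]; rfl) f n).trans
    (congrArg _ (sub_neg_eq_add n 1))

lemma Mzbar_mem_H2 {f : L2} (hf : f ∈ H2) (hf₀ : fourierBasis.repr f 0 = 0) :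
    Mzbar f ∈ H2 := by
  intro n hn
  rw [repr_Mzbar]
  rcases (show n + 1 < 0 ∨ n + 1 = 0 by omega) with hn' | hn'
  · exact hf _ hn'
  · rwa [hn']

lemma Mzbar_sub_mem_H2 {f : L2} (hf : f ∈ H2) :
    Mzbar (f - fourierBasis.repr f 0 • oneL2) ∈ H2 :=
  Mzbar_mem_H2 (sub_mem hf (H2.smul_mem _ one_mem_H2)) (by
    rw [map_sub, map_smul, lp.coeFn_sub, Pi.sub_apply, lp.coeFn_smul, Pi.smul_apply, repr_oneL2,
      if_pos rfl, smul_eq_mul, mul_one, sub_self])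

namespace InnerData

variable (U : InnerData)

lemma coeFn_toL2 : U.toL2 =ᵐ[μ] U.u := MemLp.coeFn_toLp _

lemma repr_toL2 (n : ℤ) : fourierBasis.repr U.toL2 n = fourierCoeff U.u n := by
  rw [fourierBasis_repr, fourierCoeff_congr_ae U.coeFn_toL2]

lemma toL2_mem_H2 : U.toL2 ∈ H2 := fun n hn => by rw [U.repr_toL2]; exact U.anal n hn

lemma coeFn_M (f : L2) : U.M f =ᵐ[μ] fun x => U.u x * f x := coeFn_mulCLM _ _ _ f

lemma coeFn_Mc (f : L2) : U.Mc f =ᵐ[μ] fun x => conj (U.u x) * f x := coeFn_mulCLM _ _ _ f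

lemma M_oneL2 : U.M oneL2 = U.toL2 := by
  apply Lp.ext
  filter_upwards [U.coeFn_M oneL2, coeFn_oneL2, U.coeFn_toL2] with x h1 h2 h3
  rw [h1, h2, h3, mul_one]

lemma Mc_M (f : L2) : U.Mc (U.M f) = f := by
  refine mulCLM_mulCLM_of_mul_eq_one ?_ f
  filter_upwards [U.unim] with x hx
  rw [mul_comm, Complex.mul_conj, Complex.normSq_eq_norm_sq, hx]
  norm_num

lemma Mz_M (f : L2) : Mz (U.M f) = U.M (Mz f) := mulCLM_mulCLM_comm f

lemma Mzbar_M (f : L2) : Mzbar (U.M f) = U.M (Mzbar f) := mulCLM_mulCLM_comm f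

lemma inner_M_left (f g : L2) : ⟪U.M f, g⟫_ℂ = ⟪f, U.Mc g⟫_ℂ := inner_mulCLM_left f g

lemma inner_M_M (f g : L2) : ⟪U.M f, U.M g⟫_ℂ = ⟪f, g⟫_ℂ := by
  rw [inner_M_left, Mc_M]

lemma inner_M_toL2 (h : L2) : ⟪U.M h, U.toL2⟫_ℂ = conj (fourierBasis.repr h 0) := by
  rw [← U.M_oneL2, U.inner_M_M, inner_oneL2_right]

lemma Mc_oneL2_sub_mem_Hm : U.Mc oneL2 - conj U.a0 • oneL2 ∈ Hm := by
  intro n hn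
  have hMc : U.Mc oneL2 =ᵐ[μ] fun x => conj (U.u x) := by
    filter_upwards [U.coeFn_Mc oneL2, coeFn_oneL2] with x h1 h2
    rw [h1, h2, mul_one]
  rw [map_sub, map_smul, lp.coeFn_sub, Pi.sub_apply, lp.coeFn_smul, Pi.smul_apply, repr_oneL2,
    fourierBasis_repr, fourierCoeff_congr_ae hMc, fourierCoeff_conj, smul_eq_mul]
  split_ifs with h0
  · simp [h0, InnerData.a0]
  · rw [U.anal (-n) (by omega), map_zero, mul_zero, sub_zero]

lemma inner_M_oneL2 {h : L2} (hh : h ∈ H2) :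
    ⟪U.M h, oneL2⟫_ℂ = conj (U.a0 * fourierBasis.repr h 0) := by
  calc ⟪U.M h, oneL2⟫_ℂ
      = ⟪h, U.Mc oneL2 - conj U.a0 • oneL2⟫_ℂ + ⟪h, conj U.a0 • oneL2⟫_ℂ := by
        rw [← inner_add_right, sub_add_cancel, inner_M_left]
    _ = conj (U.a0 * fourierBasis.repr h 0) := by
        rw [inner_eq_zero_of_mem_H2_of_mem_Hm hh U.Mc_oneL2_sub_mem_Hm, zero_add,
          inner_smul_right, inner_oneL2_right, map_mul]

lemma mem_Ku_iff {f : L2} : f ∈ U.Ku ↔ f ∈ H2 ∧ ∀ h ∈ H2, ⟪U.M h, f⟫_ℂ = 0 := by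
  refine Submodule.mem_inf.trans (and_congr_right fun _ => ?_)
  refine (Submodule.mem_orthogonal _ _).trans ⟨fun h g hg => h _ ⟨g, hg, rfl⟩, ?_⟩
  rintro h _ ⟨g, hg, rfl⟩
  exact h g hg

lemma toL2_mem_KP : U.toL2 ∈ U.KP := by
  rw [InnerData.KP, Submodule.mem_orthogonal']
  intro w hw
  rw [← U.M_oneL2]
  exact (U.mem_Ku_iff.mp hw).2 _ one_mem_H2

lemma k0_mem_Ku : U.k0 ∈ U.Ku := by
  refine U.mem_Ku_iff.mpr ⟨sub_mem one_mem_H2 (H2.smul_mem _ U.toL2_mem_H2), fun h hh => ?_⟩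
  rw [InnerData.k0, inner_sub_right, inner_smul_right, U.inner_M_oneL2 hh, U.inner_M_toL2,
    map_mul, sub_self]

lemma Mzbar_toL2_sub_mem_Ku : Mzbar (U.toL2 - U.a0 • oneL2) ∈ U.Ku := by
  have ha0 : fourierBasis.repr U.toL2 0 = U.a0 := U.repr_toL2 0
  refine U.mem_Ku_iff.mpr ⟨ha0 ▸ Mzbar_sub_mem_H2 U.toL2_mem_H2, fun h hh => ?_⟩
  rw [← inner_Mz_left, U.Mz_M, inner_sub_right, inner_smul_right, U.inner_M_toL2,
    U.inner_M_oneL2 (Mz_mem_H2 hh), repr_Mz, hh (0 - 1) (by norm_num)]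
  simp

lemma inner_M_Mz {h w : L2} (hh : h ∈ H2) (hw : w ∈ U.Ku) :
    ⟪U.M h, Mz w⟫_ℂ = conj (fourierBasis.repr h 0) * ⟪U.toL2, Mz w⟫_ℂ := by
  set c := fourierBasis.repr h 0
  -- `h - ĥ(0) = z g` with `g ∈ H²`, and `w ⊥ u g`
  have hzero : ⟪U.M (h - c • oneL2), Mz w⟫_ℂ = 0 := by
    rw [← inner_Mzbar_left, U.Mzbar_M]
    exact (U.mem_Ku_iff.mp hw).2 _ (Mzbar_sub_mem_H2 hh)
  calc ⟪U.M h, Mz w⟫_ℂ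
      = ⟪U.M (h - c • oneL2), Mz w⟫_ℂ + ⟪U.M (c • oneL2), Mz w⟫_ℂ := by
        rw [← inner_add_left, ← map_add, sub_add_cancel]
    _ = conj c * ⟪U.toL2, Mz w⟫_ℂ := by
        rw [hzero, zero_add, map_smul, inner_smul_left, M_oneL2]

lemma Mz_sub_inner_smul_mem_Ku {w : L2} (hw : w ∈ U.Ku) :
    Mz w - ⟪U.toL2, Mz w⟫_ℂ • U.toL2 ∈ U.Ku := by
  refine U.mem_Ku_iff.mpr ⟨sub_mem (Mz_mem_H2 (U.mem_Ku_iff.mp hw).1)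
    (H2.smul_mem _ U.toL2_mem_H2), fun h hh => ?_⟩
  rw [inner_sub_right, inner_smul_right, U.inner_M_Mz hh hw, U.inner_M_toL2]
  ring

lemma starProjection_KP_orthogonal_Mzbar {f : L2} (hf : f ∈ U.KP) :
    U.KPᗮ.starProjection (Mzbar f) = ⟪U.toL2, f⟫_ℂ • Mzbar (U.toL2 - U.a0 • oneL2) := by
  refine Submodule.eq_starProjection_of_mem_orthogonal
    (Submodule.smul_mem _ _ (U.Ku.le_orthogonal_orthogonal U.Mzbar_toL2_sub_mem_Ku))
    (U.KP.le_orthogonal_orthogonal ?_)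
  rw [InnerData.KP, Submodule.mem_orthogonal]
  intro w hw
  set d := ⟪U.toL2, Mz w⟫_ℂ
  have hf' : ⟪w, Mzbar f⟫_ℂ = conj d * ⟪U.toL2, f⟫_ℂ := by
    calc ⟪w, Mzbar f⟫_ℂ = ⟪Mz w - d • U.toL2, f⟫_ℂ + ⟪d • U.toL2, f⟫_ℂ := by
          rw [← inner_add_left, sub_add_cancel, inner_Mz_left]
      _ = conj d * ⟪U.toL2, f⟫_ℂ := by
          rw [(Submodule.mem_orthogonal _ _).mp hf _ (U.Mz_sub_inner_smul_mem_Ku hw), zero_add,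
            inner_smul_left]
  have hq : ⟪w, Mzbar (U.toL2 - U.a0 • oneL2)⟫_ℂ = conj d := by
    rw [← inner_Mz_left, inner_sub_right, inner_smul_right, inner_oneL2_right, repr_Mz,
      (U.mem_Ku_iff.mp hw).1 (0 - 1) (by norm_num), map_zero, mul_zero, sub_zero, inner_conj_symm]
  rw [inner_sub_right, inner_smul_right, hf', hq]
  ring

lemma starProjection_KP_toL2_sub :
    U.KP.starProjection (U.toL2 - U.a0 • oneL2)
      = ((1 - ‖U.a0‖ ^ 2 : ℝ) : ℂ) • U.toL2 := by
  have hu : U.KP.starProjection U.toL2 = U.toL2 :=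
    Submodule.starProjection_eq_self_iff.mpr U.toL2_mem_KP
  have h1 : U.KP.starProjection oneL2 = conj U.a0 • U.toL2 :=
    Submodule.eq_starProjection_of_mem_orthogonal (Submodule.smul_mem _ _ U.toL2_mem_KP)
      (U.Ku.le_orthogonal_orthogonal U.k0_mem_Ku)
  rw [map_sub, map_smul, hu, h1, smul_smul, Complex.mul_conj, Complex.normSq_eq_norm_sq]
  push_cast
  rw [sub_smul, one_smul]

lemma Du_eq_compression : U.Du = U.KP.compression Mz := rfl

end InnerData

/-- `D_u D_u^* = I − (1 − |u(0)|²)(u ⊗ u)` on `K_u^⊥`. -/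
theorem Du_mul_adjoint (U : InnerData) (f : U.KP) :
    (U.Du ((ContinuousLinearMap.adjoint U.Du) f) : L2)
      = (f : L2) - ((1 - ‖U.a0‖ ^ 2 : ℝ) : ℂ) •
          ((inner ℂ U.toL2 (f : L2) : ℂ) • U.toL2) := by
  have hMz : ∀ g, Mz (ContinuousLinearMap.adjoint Mz g) = g := fun g => by
    rw [Mz_adjoint, Mz_Mzbar]
  rw [U.Du_eq_compression, U.KP.coe_compression_adjoint_compression_apply hMz, Mz_adjoint,
    U.starProjection_KP_orthogonal_Mzbar f.2, map_smul, Mz_Mzbar, map_smul,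
    U.starProjection_KP_toL2_sub, smul_comm]

end Paper
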